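/- For every n ≥ 1, every 1 ≤ p ≤ 2, every θ₀ ∈ [0, π/2) and every function f : Ω_n → ℂ, ‖f − cos^{Δ/4}θ₀(f)‖_p ≤ (θ₀/2) ‖ |∇f| ‖_p. -/

import Mathlib

open Real Finset

namespace DiscreteCube

variable {n : ℕ}

/-- The point of the cube `{-1,1}^n` encoded by `x : Fin n → Bool`:
coordinate `j` is `1` if `x j = true` and `-1` otherwise. -/
def sgn (b : Bool) : ℂ := if b then 1 else -1

/-- Negate the `j`-th coordinate. -/
def flip (j : Fin n) (x : Fin n → Bool) : Fin n → Bool :=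
  Function.update x j (!(x j))

/-- Discrete partial derivative `(∂_j f)(x) = f(x) - f(x e_j)`. -/
def pd (j : Fin n) (f : (Fin n → Bool) → ℂ) (x : Fin n → Bool) : ℂ :=
  f x - f (flip j x)

/-- Length of the discrete gradient, `|∇f|(x) = (Σ_j |(∂_j f)(x)|²)^{1/2}`. -/
noncomputable def gradLen (f : (Fin n → Bool) → ℂ) (x : Fin n → Bool) : ℝ :=
  Real.sqrt (∑ j : Fin n, ‖pd j f x‖ ^ 2)

/-- Expectation with respect to the uniform probability on the cube. -/
noncomputable def expect (f : (Fin n → Bool) → ℂ) : ℂ :=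
  (∑ x : Fin n → Bool, f x) / 2 ^ n

/-- `L^p` norm (`1 ≤ p < ∞`) of a complex-valued function on the cube. -/
noncomputable def cLp (p : ℝ) (f : (Fin n → Bool) → ℂ) : ℝ :=
  ((∑ x : Fin n → Bool, ‖f x‖ ^ p) / 2 ^ n) ^ (1 / p)

/-- `L^p` norm (`1 ≤ p < ∞`) of a real-valued function on the cube. -/
noncomputable def rLp (p : ℝ) (g : (Fin n → Bool) → ℝ) : ℝ :=
  ((∑ x : Fin n → Bool, |g x| ^ p) / 2 ^ n) ^ (1 / p)

end DiscreteCube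

namespace DiscreteCube

variable {n : ℕ}

/-- Walsh function `ω_A(x) = ∏_{j∈A} x_j`. -/
def walsh (A : Finset (Fin n)) (x : Fin n → Bool) : ℂ := ∏ j ∈ A, sgn (x j)

/-- Walsh–Fourier coefficient `f̂(A) = 𝔼[f·ω_A]`. -/
noncomputable def coeff (f : (Fin n → Bool) → ℂ) (A : Finset (Fin n)) : ℂ :=
  (∑ x : Fin n → Bool, f x * walsh A x) / 2 ^ n

/-- The operator `cos^{Δ/4}θ`:
`cos^{Δ/4}θ(f) = Σ_A cos^{|A|}θ · f̂(A) ω_A` (the `A = ∅` term is `f̂(∅)`). -/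
noncomputable def cosD (θ : ℝ) (f : (Fin n → Bool) → ℂ) (x : Fin n → Bool) : ℂ :=
  ∑ A : Finset (Fin n), (Real.cos θ : ℂ) ^ A.card * coeff f A * walsh A x

/-- Fractional power of the discrete Laplacian, `Δ^β f = Σ_{A≠∅} (4|A|)^β f̂(A) ω_A`
(for `β > 0` the `A = ∅` term vanishes since `0^β = 0`). -/
noncomputable def deltaPow (β : ℝ) (f : (Fin n → Bool) → ℂ) (x : Fin n → Bool) : ℂ :=
  ∑ A : Finset (Fin n), (((4 * (A.card : ℝ)) ^ β : ℝ) : ℂ) * coeff f A * walsh A x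

/-- The constant `K_α = (1/Γ(1−α)) ∫_0^{π/2} (−log cos θ)^{−α} dθ`. -/
noncomputable def Kconst (α : ℝ) : ℝ :=
  (1 / Real.Gamma (1 - α)) * ∫ θ in (0:ℝ)..(Real.pi / 2), (-Real.log (Real.cos θ)) ^ (-α)

/-- The constant `k_β = (1/Γ(β)) ∫_0^{π/2} (−log cos θ)^{β−1} dθ`. -/
noncomputable def kconst (β : ℝ) : ℝ :=
  (1 / Real.Gamma β) * ∫ θ in (0:ℝ)..(Real.pi / 2), (-Real.log (Real.cos θ)) ^ (β - 1)

end DiscreteCube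

/-!
Let `g = f - cos^{Δ/4}θ₀ f` and `h = ḡ |g|^{p-2}`, so that `𝔼[g h] = ‖g‖_p^p` and
`|h| ≤ |g|^{p-1}`. Since `cos^{Δ/4}θ` is the noise operator `T_c` with `c = cos θ`,
differentiating in `θ` gives `𝔼[g h] = ∫_0^{θ₀} sin θ · Σ_A |A| c^{|A|-1} f̂(A) ĥ(A) dθ`, and
`2 sin²θ · Σ_A |A| c^{|A|-1} f̂(A) ĥ(A) = Σ_j 𝔼[∂_j f · V_j h]`, where `V_j h(x)` is the
covariance of `σ_j` and `h(xσ)` for `σ` drawn from the product measure with coordinate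
means `c`. The functions `σ ↦ σ_j - c` are orthogonal with squared norm `1 - c² = sin²θ`, so
Bessel's inequality gives `Σ_j |V_j h|² ≤ sin²θ · T_c(|h|²)`, and Cauchy–Schwarz in `j` bounds
the integrand by `½ 𝔼[|∇f| · (T_c|h|²)^{1/2}]`. Hölder's inequality, Jensen's inequality
`(T_c|h|²)^{q/2} ≤ T_c(|h|^q)` (here `q ≥ 2`, i.e. `p ≤ 2`) and `𝔼 T_c = 𝔼` bound this by
`½ ‖∇f‖_p ‖g‖_p^{p-1}`; integrating over `θ` and dividing by `‖g‖_p^{p-1}` gives the claim.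
-/

open ComplexConjugate
open scoped symmDiff

section Bessel

variable {α ι : Type*} [Fintype α] [Fintype ι] [DecidableEq ι] {w : α → ℝ} {ξ : ι → α → ℝ}
  {κ : ℝ}

lemma sum_mul_norm_sum_mul_sq (hξ : ∀ j k, ∑ a, w a * ξ j a * ξ k a = if j = k then κ else 0)
    (u : ι → ℂ) : ∑ a, w a * ‖∑ j, u j * ξ j a‖ ^ 2 = κ * ∑ j, ‖u j‖ ^ 2 := by
  apply Complex.ofReal_injective
  push_cast
  simp_rw [← Complex.mul_conj', map_sum, map_mul, Complex.conj_ofReal, Finset.sum_mul_sum,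
    Finset.mul_sum]
  rw [Finset.sum_comm]
  refine Finset.sum_congr rfl fun j _ => ?_
  rw [Finset.sum_comm]
  have hjk : ∀ k, ∑ a, (w a : ℂ) * (u j * ξ j a * (conj (u k) * ξ k a))
      = u j * conj (u k) * ((if j = k then κ else 0 : ℝ) : ℂ) := by
    intro k
    rw [← hξ j k]
    push_cast
    rw [Finset.mul_sum]
    exact Finset.sum_congr rfl fun a _ => by ring
  simp_rw [hjk, apply_ite (Complex.ofReal), Complex.ofReal_zero, mul_ite, mul_zero,
    Finset.sum_ite_eq, Finset.mem_univ, if_true]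
  ring

/-- Bessel's inequality for a family `ξ` that is orthogonal in `L²(w)`, each of squared norm `κ`. -/
lemma sum_norm_sum_mul_sq_le (hw : ∀ a, 0 ≤ w a) (hκ : 0 ≤ κ)
    (hξ : ∀ j k, ∑ a, w a * ξ j a * ξ k a = if j = k then κ else 0) (H : α → ℂ) :
    ∑ j, ‖∑ a, (w a * ξ j a : ℂ) * H a‖ ^ 2 ≤ κ * ∑ a, w a * ‖H a‖ ^ 2 := by
  set z : ι → ℂ := fun j => ∑ a, (w a * ξ j a : ℂ) * H a
  set W : α → ℂ := fun a => ∑ j, conj (z j) * ξ j a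
  set T := ∑ j, ‖z j‖ ^ 2
  set S := ∑ a, w a * ‖H a‖ ^ 2
  have hT0 : 0 ≤ T := by positivity
  -- Testing against `W = Σ_j z̄_j ξ_j` writes `T` as one weighted sum, and `‖W‖² = κ T`.
  have hTW : (T : ℂ) = ∑ a, (w a : ℂ) * (W a * H a) := by
    simp only [T, W, z]
    push_cast
    simp_rw [← Complex.conj_mul', Finset.mul_sum, Finset.sum_mul, Finset.mul_sum]
    rw [Finset.sum_comm]
    exact Finset.sum_congr rfl fun a _ => Finset.sum_congr rfl fun j _ => by ring
  have hT_le : T ≤ ∑ a, w a * (‖W a‖ * ‖H a‖) := by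
    have h := norm_sum_le Finset.univ fun a => (w a : ℂ) * (W a * H a)
    simpa only [← hTW, Complex.norm_real, Real.norm_eq_abs, abs_of_nonneg hT0, norm_mul,
      abs_of_nonneg (hw _)] using h
  have hWT : ∑ a, w a * ‖W a‖ ^ 2 = κ * T := by
    simpa only [Complex.norm_conj] using sum_mul_norm_sum_mul_sq hξ fun j => conj (z j)
  have hCS : (∑ a, w a * (‖W a‖ * ‖H a‖)) ^ 2 ≤ (κ * T) * S := by
    rw [← hWT]
    refine Finset.sum_sq_le_sum_mul_sum_of_sq_le_mul _ (fun a _ => mul_nonneg (hw a) (sq_nonneg _))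
      (fun a _ => mul_nonneg (hw a) (sq_nonneg _)) fun a _ => le_of_eq (by ring)
  rcases hT0.eq_or_lt with hT | hT
  · rw [← hT]
    exact mul_nonneg hκ (Finset.sum_nonneg fun a _ => mul_nonneg (hw a) (sq_nonneg _))
  · nlinarith

end Bessel

lemma sum_mul_div_le_rpow_mul_rpow {ι : Type*} (s : Finset ι) {p q N : ℝ}
    (hpq : p.HolderConjugate q) (hN : 0 < N) {G M : ι → ℝ} (hG : ∀ i ∈ s, 0 ≤ G i)
    (hM : ∀ i ∈ s, 0 ≤ M i) :
    (∑ i ∈ s, G i * M i) / N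
      ≤ ((∑ i ∈ s, G i ^ p) / N) ^ (1 / p) * ((∑ i ∈ s, M i ^ q) / N) ^ (1 / q) := by
  have hGp : 0 ≤ ∑ i ∈ s, G i ^ p := Finset.sum_nonneg fun i hi => Real.rpow_nonneg (hG i hi) p
  have hMq : 0 ≤ ∑ i ∈ s, M i ^ q := Finset.sum_nonneg fun i hi => Real.rpow_nonneg (hM i hi) q
  rw [Real.div_rpow hGp hN.le, Real.div_rpow hMq hN.le, div_mul_div_comm, ← Real.rpow_add hN,
    hpq.one_div_add_one_div, div_one, Real.rpow_one]
  exact div_le_div_of_nonneg_right (Real.inner_le_Lp_mul_Lq_of_nonneg s hpq hG hM) hN.le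

lemma rpow_one_div_le_of_le_mul_rpow {E K p : ℝ} (hE : 0 ≤ E) (hK : 0 ≤ K) (hp : 0 < p)
    (h : E ≤ K * E ^ (1 - 1 / p)) : E ^ (1 / p) ≤ K := by
  rcases hE.eq_or_lt with rfl | hE
  · rwa [Real.zero_rpow (by positivity)]
  · refine le_of_mul_le_mul_right ?_ (Real.rpow_pos_of_pos hE (1 - 1 / p))
    rwa [← Real.rpow_add hE, add_sub_cancel, Real.rpow_one]

/-- The dual vector of `z` for the pairing between `L^p` and `L^{p/(p-1)}`. -/
noncomputable def lpDual (p : ℝ) (z : ℂ) : ℂ := conj z * (‖z‖ ^ (p - 2) : ℝ)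

lemma mul_lpDual {p : ℝ} (hp : 0 < p) (z : ℂ) : z * lpDual p z = (‖z‖ ^ p : ℝ) := by
  rcases eq_or_ne z 0 with rfl | hz
  · simp [lpDual, Real.zero_rpow hp.ne']
  · rw [lpDual, ← mul_assoc, Complex.mul_conj', ← Complex.ofReal_pow, ← Complex.ofReal_mul,
      ← Real.rpow_natCast, ← Real.rpow_add (norm_pos_iff.mpr hz)]
    norm_num

lemma norm_lpDual_le (p : ℝ) (z : ℂ) : ‖lpDual p z‖ ≤ ‖z‖ ^ (p - 1) := by
  rcases eq_or_ne z 0 with rfl | hz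
  · simpa [lpDual] using Real.rpow_nonneg le_rfl (p - 1)
  · rw [lpDual, norm_mul, Complex.norm_conj, Complex.norm_real, Real.norm_of_nonneg (by positivity),
      show p - 1 = 1 + (p - 2) by ring, Real.rpow_add (norm_pos_iff.mpr hz), Real.rpow_one]

namespace DiscreteCube

variable {n : ℕ}

lemma sgn_mul_self (b : Bool) : sgn b * sgn b = 1 := by
  cases b <;> norm_num [sgn]

lemma sum_prod_bool {R : Type*} [CommSemiring R] (φ : Fin n → Bool → R) :
    ∑ x : Fin n → Bool, ∏ j, φ j (x j) = ∏ j, (φ j true + φ j false) := by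
  simp only [← Fintype.sum_bool, Fintype.prod_sum]

lemma walsh_eq_prod_univ (A : Finset (Fin n)) (x : Fin n → Bool) :
    walsh A x = ∏ j, if j ∈ A then sgn (x j) else 1 :=
  (Fintype.prod_ite_mem A _).symm

lemma walsh_mul_walsh (A B : Finset (Fin n)) (x : Fin n → Bool) :
    walsh A x * walsh B x = walsh (A ∆ B) x := by
  simp only [walsh_eq_prod_univ, ← Finset.prod_mul_distrib]
  refine Finset.prod_congr rfl fun j _ => ?_
  by_cases hA : j ∈ A <;> by_cases hB : j ∈ B <;> simp [Finset.mem_symmDiff, hA, hB, sgn_mul_self]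

lemma sum_prod_mul_walsh (a : Bool → ℂ) (A : Finset (Fin n)) :
    ∑ x : Fin n → Bool, (∏ j, a (x j)) * walsh A x
      = (a true - a false) ^ A.card * (a true + a false) ^ (n - A.card) := by
  have hfac : ∀ j, a true * (if j ∈ A then sgn true else 1)
      + a false * (if j ∈ A then sgn false else 1)
      = if j ∈ A then a true - a false else a true + a false := by
    intro j
    split_ifs <;> simp only [sgn, if_true, Bool.false_eq_true, if_false, mul_one, mul_neg,
      ← sub_eq_add_neg]
  simp_rw [walsh_eq_prod_univ, ← Finset.prod_mul_distrib]
  rw [sum_prod_bool fun j b => a b * if j ∈ A then sgn b else 1]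
  simp_rw [hfac]
  rw [Finset.prod_ite, Finset.prod_const, Finset.prod_const, Finset.filter_not,
    Finset.card_sdiff, Finset.filter_mem_eq_inter, Finset.univ_inter, Finset.card_univ,
    Fintype.card_fin, Finset.inter_univ]

lemma sum_walsh_mul_walsh (A B : Finset (Fin n)) :
    ∑ x : Fin n → Bool, walsh A x * walsh B x = if A = B then 2 ^ n else 0 := by
  have h := sum_prod_mul_walsh (n := n) (fun _ => 1) (A ∆ B)
  simp only [Finset.prod_const_one, one_mul, sub_self] at h
  simp_rw [walsh_mul_walsh, h]
  split_ifs with hAB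
  · rw [hAB, symmDiff_self, Finset.bot_eq_empty, Finset.card_empty, pow_zero, one_mul, tsub_zero]
    norm_num
  · rw [zero_pow (by simpa using hAB), zero_mul]

lemma coeff_sum_walsh (d : Finset (Fin n) → ℂ) (A : Finset (Fin n)) :
    coeff (fun x => ∑ B, d B * walsh B x) A = d A := by
  simp only [coeff, Finset.sum_mul, mul_assoc]
  rw [Finset.sum_comm]
  simp_rw [← Finset.mul_sum, sum_walsh_mul_walsh, mul_ite, mul_zero, Finset.sum_ite_eq',
    Finset.mem_univ, if_true]
  exact mul_div_cancel_right₀ _ (pow_ne_zero _ two_ne_zero)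

/-- The group law of the cube: `translate x σ` is the pointwise product of the sign vectors. -/
def translate (x σ : Fin n → Bool) : Fin n → Bool := fun j => x j == σ j

lemma translate_translate (x σ : Fin n → Bool) : translate (translate x σ) σ = x := by
  funext j; simp only [translate]; cases x j <;> cases σ j <;> rfl

lemma sum_comp_translate {M : Type*} [AddCommMonoid M] (σ : Fin n → Bool)
    (F : (Fin n → Bool) → M) : ∑ x, F (translate x σ) = ∑ x, F x :=
  Fintype.sum_bijective _ (Function.Involutive.bijective (translate_translate · σ)) _ _
    fun _ => rfl

lemma walsh_translate (A : Finset (Fin n)) (x σ : Fin n → Bool) :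
    walsh A (translate x σ) = walsh A x * walsh A σ := by
  simp only [walsh, ← Finset.prod_mul_distrib]
  refine Finset.prod_congr rfl fun j _ => ?_
  simp only [translate]; cases x j <;> cases σ j <;> norm_num [sgn]

lemma sum_walsh_eq_ite (z : Fin n → Bool) :
    ∑ A, walsh A z = if z = fun _ => true then 2 ^ n else 0 := by
  simp only [walsh]
  rw [← Finset.powerset_univ, ← Finset.prod_add_one]
  split_ifs with hz
  · simp only [hz, sgn, if_true, Finset.prod_const, Finset.card_univ, Fintype.card_fin]
    norm_num
  · obtain ⟨j, hj⟩ : ∃ j, z j = false := by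
      by_contra! h; exact hz (funext fun j => by simpa using h j)
    exact Finset.prod_eq_zero (Finset.mem_univ j) (by simp [hj, sgn])

lemma translate_eq_true_iff (x y : Fin n → Bool) : (translate x y = fun _ => true) ↔ x = y := by
  simp [funext_iff, translate]

lemma sum_coeff_mul_walsh (u : (Fin n → Bool) → ℂ) (y : Fin n → Bool) :
    ∑ A, coeff u A * walsh A y = u y := by
  simp only [coeff, div_mul_eq_mul_div, ← Finset.sum_div, Finset.sum_mul, mul_assoc]
  rw [Finset.sum_comm]
  simp_rw [← Finset.mul_sum, ← walsh_translate, sum_walsh_eq_ite, translate_eq_true_iff,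
    mul_ite, mul_zero, Finset.sum_ite_eq', Finset.mem_univ, if_true]
  exact mul_div_cancel_right₀ _ (pow_ne_zero _ two_ne_zero)

lemma expect_mul_eq_sum_coeff_mul_coeff (u v : (Fin n → Bool) → ℂ) :
    expect (fun x => u x * v x) = ∑ A, coeff u A * coeff v A := by
  conv_lhs => enter [1, x, 2]; rw [← sum_coeff_mul_walsh v x]
  simp only [expect, Finset.mul_sum]
  rw [Finset.sum_comm, Finset.sum_div]
  refine Finset.sum_congr rfl fun A _ => ?_
  simp_rw [mul_left_comm (u _), ← Finset.mul_sum, mul_div_assoc]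
  exact mul_comm _ _

lemma coeff_sub (u v : (Fin n → Bool) → ℂ) (A : Finset (Fin n)) :
    coeff (fun x => u x - v x) A = coeff u A - coeff v A := by
  simp only [coeff, sub_mul, Finset.sum_sub_distrib, sub_div]

lemma coeff_sum_mul {ι : Type*} (s : Finset ι) (a : ι → ℂ) (u : ι → (Fin n → Bool) → ℂ)
    (A : Finset (Fin n)) :
    coeff (fun x => ∑ i ∈ s, a i * u i x) A = ∑ i ∈ s, a i * coeff (u i) A := by
  simp only [coeff, Finset.sum_mul, Finset.mul_sum, Finset.sum_div, mul_div_assoc, mul_assoc]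
  exact Finset.sum_comm

lemma coeff_comp_translate (u : (Fin n → Bool) → ℂ) (σ : Fin n → Bool) (A : Finset (Fin n)) :
    coeff (fun x => u (translate x σ)) A = walsh A σ * coeff u A := by
  have h := sum_comp_translate σ fun y => u y * walsh A (translate y σ)
  simp only [translate_translate, walsh_translate] at h
  rw [coeff, h, coeff, mul_div_assoc', Finset.mul_sum]
  simp only [mul_comm, mul_left_comm]

lemma flip_eq_translate (j : Fin n) (x : Fin n → Bool) :
    flip j x = translate x (flip j fun _ => true) := by
  funext i
  by_cases hi : i = j
  · subst hi; simp [flip, translate]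
  · simp [flip, translate, Function.update_of_ne hi]

lemma walsh_flip_true (j : Fin n) (A : Finset (Fin n)) :
    walsh A (flip j fun _ => true) = if j ∈ A then -1 else 1 := by
  have h : ∀ i, sgn ((flip j fun _ => true) i) = if i = j then -1 else 1 := by
    intro i; by_cases hi : i = j <;> simp [flip, sgn, hi]
  simp only [walsh, h, Finset.prod_ite_eq']

lemma coeff_pd (j : Fin n) (f : (Fin n → Bool) → ℂ) (A : Finset (Fin n)) :
    coeff (pd j f) A = if j ∈ A then 2 * coeff f A else 0 := by
  have h : pd j f = fun x => f x - f (translate x (flip j fun _ => true)) :=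
    funext fun x => by rw [pd, ← flip_eq_translate]
  rw [h, coeff_sub, coeff_comp_translate, walsh_flip_true]
  split_ifs <;> ring

lemma coeff_cosD (θ : ℝ) (f : (Fin n → Bool) → ℂ) (A : Finset (Fin n)) :
    coeff (cosD θ f) A = (Real.cos θ : ℂ) ^ A.card * coeff f A :=
  coeff_sum_walsh (fun B => (Real.cos θ : ℂ) ^ B.card * coeff f B) A

def rsgn (b : Bool) : ℝ := if b then 1 else -1

@[simp, norm_cast]
lemma ofReal_rsgn (b : Bool) : ((rsgn b : ℝ) : ℂ) = sgn b := by
  cases b <;> simp [rsgn, sgn]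

/-- The product probability on the cube whose coordinates have mean `c`; averaging against it
is the noise operator `T_c`, so `T_{cos θ} = cos^{Δ/4}θ`. -/
noncomputable def noiseWeight (c : ℝ) (σ : Fin n → Bool) : ℝ := ∏ j, (1 + c * rsgn (σ j)) / 2

lemma noiseWeight_nonneg {c : ℝ} (hc : |c| ≤ 1) (σ : Fin n → Bool) : 0 ≤ noiseWeight c σ := by
  rw [abs_le] at hc
  refine Finset.prod_nonneg fun j _ => ?_
  cases σ j <;> simp only [rsgn, Bool.false_eq_true, if_true, if_false, mul_neg, mul_one] <;>
    linarith

lemma sum_noiseWeight_mul_walsh (c : ℝ) (A : Finset (Fin n)) :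
    ∑ σ, (noiseWeight c σ : ℂ) * walsh A σ = (c : ℂ) ^ A.card := by
  have h := sum_prod_mul_walsh (fun b => (1 + c * sgn b) / 2) A
  push_cast [noiseWeight]
  rw [h]
  simp only [sgn, if_true, Bool.false_eq_true, if_false]
  ring

lemma sum_noiseWeight (c : ℝ) : ∑ σ : Fin n → Bool, noiseWeight c σ = 1 := by
  have h := sum_noiseWeight_mul_walsh (n := n) c ∅
  simp only [walsh, Finset.prod_empty, mul_one, Finset.card_empty, pow_zero] at h
  exact_mod_cast h

noncomputable def noise (c : ℝ) (u : (Fin n → Bool) → ℝ) (x : Fin n → Bool) : ℝ :=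
  ∑ σ, noiseWeight c σ * u (translate x σ)

lemma sum_noise (c : ℝ) (u : (Fin n → Bool) → ℝ) : ∑ x, noise c u x = ∑ x, u x := by
  simp only [noise]
  rw [Finset.sum_comm]
  simp_rw [← Finset.mul_sum, sum_comp_translate, ← Finset.sum_mul, sum_noiseWeight, one_mul]

lemma noise_le_one {c : ℝ} (hc : |c| ≤ 1) {u : (Fin n → Bool) → ℝ} (hu : ∀ x, u x ≤ 1)
    (x : Fin n → Bool) : noise c u x ≤ 1 :=
  calc noise c u x ≤ ∑ σ, noiseWeight c σ :=
        Finset.sum_le_sum fun σ _ => mul_le_of_le_one_right (noiseWeight_nonneg hc σ) (hu _)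
    _ = 1 := sum_noiseWeight c

lemma noise_rpow_le {c : ℝ} (hc : |c| ≤ 1) {u : (Fin n → Bool) → ℝ} (hu : ∀ x, 0 ≤ u x)
    {r : ℝ} (hr : 1 ≤ r) (x : Fin n → Bool) : noise c u x ^ r ≤ noise c (fun y => u y ^ r) x :=
  Real.rpow_arith_mean_le_arith_mean_rpow _ _ _ (fun σ _ => noiseWeight_nonneg hc σ)
    (sum_noiseWeight c) (fun _ _ => hu _) hr

def centeredSign (c : ℝ) (j : Fin n) (σ : Fin n → Bool) : ℝ := rsgn (σ j) - c

lemma ofReal_centeredSign (c : ℝ) (j : Fin n) (σ : Fin n → Bool) :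
    (centeredSign c j σ : ℂ) = walsh {j} σ - c := by
  simp [centeredSign, walsh]

lemma singleton_symmDiff (j : Fin n) (B : Finset (Fin n)) :
    {j} ∆ B = if j ∈ B then B.erase j else insert j B := by
  ext i
  by_cases hi : i = j
  · subst hi; split_ifs <;> simp [Finset.mem_symmDiff, *]
  · split_ifs <;> simp [Finset.mem_symmDiff, hi]

lemma sum_noiseWeight_mul_centeredSign_mul_walsh (c : ℝ) (j : Fin n) (B : Finset (Fin n)) :
    ∑ σ, (noiseWeight c σ * centeredSign c j σ : ℂ) * walsh B σ
      = if j ∈ B then (1 - (c : ℂ) ^ 2) * (c : ℂ) ^ (B.card - 1) else 0 := by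
  have h : ∀ σ, (noiseWeight c σ * centeredSign c j σ : ℂ) * walsh B σ
      = noiseWeight c σ * walsh ({j} ∆ B) σ - c * (noiseWeight c σ * walsh B σ) := by
    intro σ; rw [ofReal_centeredSign, ← walsh_mul_walsh]; ring
  simp_rw [h, Finset.sum_sub_distrib, ← Finset.mul_sum, sum_noiseWeight_mul_walsh,
    singleton_symmDiff]
  split_ifs with hj
  · obtain ⟨k, hk⟩ := Nat.exists_eq_add_one_of_ne_zero (Finset.card_ne_zero_of_mem hj)
    rw [Finset.card_erase_of_mem hj, hk]
    simp only [add_tsub_cancel_right]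
    ring
  · rw [Finset.card_insert_of_notMem hj]
    ring

lemma sum_noiseWeight_mul_centeredSign_mul_centeredSign (c : ℝ) (j k : Fin n) :
    ∑ σ, noiseWeight c σ * centeredSign c j σ * centeredSign c k σ
      = if j = k then 1 - c ^ 2 else 0 := by
  have h : ∀ σ, ((noiseWeight c σ * centeredSign c j σ * centeredSign c k σ : ℝ) : ℂ)
      = (noiseWeight c σ * centeredSign c j σ : ℂ) * walsh {k} σ
        - c * ((noiseWeight c σ * centeredSign c j σ : ℂ) * walsh ∅ σ) := by
    intro σ
    push_cast
    rw [ofReal_centeredSign c k]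
    simp only [walsh, Finset.prod_singleton, Finset.prod_empty, mul_one]
    ring
  apply Complex.ofReal_injective
  rw [Complex.ofReal_sum]
  simp_rw [h, Finset.sum_sub_distrib, ← Finset.mul_sum, sum_noiseWeight_mul_centeredSign_mul_walsh,
    Finset.mem_singleton, Finset.notMem_empty, if_false]
  split_ifs <;> simp

/-- `noiseCov c j h x` is the covariance of `σ_j` and `h (x σ)` for `σ ∼ noiseWeight c`. -/
noncomputable def noiseCov (c : ℝ) (j : Fin n) (h : (Fin n → Bool) → ℂ) (x : Fin n → Bool) : ℂ :=
  ∑ σ, (noiseWeight c σ * centeredSign c j σ : ℂ) * h (translate x σ)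

lemma coeff_noiseCov (c : ℝ) (j : Fin n) (h : (Fin n → Bool) → ℂ) (B : Finset (Fin n)) :
    coeff (noiseCov c j h) B
      = (if j ∈ B then (1 - (c : ℂ) ^ 2) * (c : ℂ) ^ (B.card - 1) else 0) * coeff h B := by
  unfold noiseCov
  rw [coeff_sum_mul]
  simp_rw [coeff_comp_translate, ← mul_assoc, ← Finset.sum_mul,
    sum_noiseWeight_mul_centeredSign_mul_walsh]

lemma sum_norm_noiseCov_sq_le {c : ℝ} (hc : |c| ≤ 1) (h : (Fin n → Bool) → ℂ)
    (x : Fin n → Bool) :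
    ∑ j, ‖noiseCov c j h x‖ ^ 2 ≤ (1 - c ^ 2) * noise c (fun y => ‖h y‖ ^ 2) x :=
  sum_norm_sum_mul_sq_le (noiseWeight_nonneg hc)
    (sub_nonneg.2 ((sq_le_one_iff_abs_le_one c).2 hc))
    (sum_noiseWeight_mul_centeredSign_mul_centeredSign c) _

/-- The derivative in `c` of `𝔼[(T_c f) h] = ∑_A c^{|A|} f̂(A) ĥ(A)`. -/
noncomputable def pairingDeriv (c : ℝ) (f h : (Fin n → Bool) → ℂ) : ℂ :=
  ∑ A, (A.card : ℂ) * (c : ℂ) ^ (A.card - 1) * (coeff f A * coeff h A)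

lemma sum_expect_pd_mul_noiseCov (c : ℝ) (f h : (Fin n → Bool) → ℂ) :
    ∑ j, expect (fun x => pd j f x * noiseCov c j h x)
      = 2 * (1 - (c : ℂ) ^ 2) * pairingDeriv c f h := by
  simp_rw [expect_mul_eq_sum_coeff_mul_coeff, coeff_pd, coeff_noiseCov, ite_mul, zero_mul,
    mul_ite, mul_zero]
  rw [Finset.sum_comm, pairingDeriv, Finset.mul_sum]
  refine Finset.sum_congr rfl fun A _ => ?_
  rw [Finset.sum_ite_mem, Finset.univ_inter, Finset.sum_ite_of_true fun _ hj => hj,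
    Finset.sum_const, nsmul_eq_mul]
  ring

lemma norm_sum_pd_mul_noiseCov_le {c : ℝ} (hc : |c| ≤ 1) (f h : (Fin n → Bool) → ℂ)
    (x : Fin n → Bool) :
    ‖∑ j, pd j f x * noiseCov c j h x‖
      ≤ √(1 - c ^ 2) * (gradLen f x * √(noise c (fun y => ‖h y‖ ^ 2) x)) :=
  calc ‖∑ j, pd j f x * noiseCov c j h x‖
      ≤ ∑ j, ‖pd j f x‖ * ‖noiseCov c j h x‖ := by
        simpa only [norm_mul] using norm_sum_le Finset.univ fun j => pd j f x * noiseCov c j h x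
    _ ≤ gradLen f x * √(∑ j, ‖noiseCov c j h x‖ ^ 2) := Real.sum_mul_le_sqrt_mul_sqrt _ _ _
    _ ≤ gradLen f x * √((1 - c ^ 2) * noise c (fun y => ‖h y‖ ^ 2) x) :=
        mul_le_mul_of_nonneg_left (Real.sqrt_le_sqrt (sum_norm_noiseCov_sq_le hc h x))
          (Real.sqrt_nonneg _)
    _ = _ := by rw [Real.sqrt_mul (sub_nonneg.2 ((sq_le_one_iff_abs_le_one c).2 hc))]; ring

lemma two_mul_sqrt_mul_norm_pairingDeriv_le {c : ℝ} (hc : |c| ≤ 1) (f h : (Fin n → Bool) → ℂ) :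
    2 * √(1 - c ^ 2) * ‖pairingDeriv c f h‖
      ≤ (∑ x, gradLen f x * √(noise c (fun y => ‖h y‖ ^ 2) x)) / 2 ^ n := by
  set s := √(1 - c ^ 2)
  set X := (∑ x, gradLen f x * √(noise c (fun y => ‖h y‖ ^ 2) x)) / 2 ^ n
  have hX : 0 ≤ X := div_nonneg
    (Finset.sum_nonneg fun x _ => mul_nonneg (Real.sqrt_nonneg _) (Real.sqrt_nonneg _))
    (by positivity)
  have hsq : s ^ 2 = 1 - c ^ 2 := Real.sq_sqrt (sub_nonneg.2 ((sq_le_one_iff_abs_le_one c).2 hc))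
  have key : s * (2 * s * ‖pairingDeriv c f h‖) ≤ s * X :=
    calc s * (2 * s * ‖pairingDeriv c f h‖)
        = ‖∑ j, expect (fun x => pd j f x * noiseCov c j h x)‖ := by
          have h2 : 2 * (1 - (c : ℂ) ^ 2) = ((2 * s ^ 2 : ℝ) : ℂ) := by push_cast [hsq]; ring
          rw [sum_expect_pd_mul_noiseCov, h2, norm_mul, Complex.norm_real,
            Real.norm_of_nonneg (by positivity)]
          ring
      _ = ‖∑ x, ∑ j, pd j f x * noiseCov c j h x‖ / 2 ^ n := by
          simp only [expect, ← Finset.sum_div, norm_div, norm_pow, Complex.norm_two]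
          rw [Finset.sum_comm]
      _ ≤ (∑ x, s * (gradLen f x * √(noise c (fun y => ‖h y‖ ^ 2) x))) / 2 ^ n := by
          gcongr
          exact (norm_sum_le _ _).trans
            (Finset.sum_le_sum fun x _ => norm_sum_pd_mul_noiseCov_le hc f h x)
      _ = s * X := by rw [← Finset.mul_sum, mul_div_assoc]
  rcases (show 0 ≤ s from Real.sqrt_nonneg _).eq_or_lt with hs | hs
  · rw [← hs, mul_zero, zero_mul]; exact hX
  · exact le_of_mul_le_mul_left key hs

lemma hasDerivAt_sum_cos_pow_mul (f h : (Fin n → Bool) → ℂ) (θ : ℝ) :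
    HasDerivAt (fun t => ∑ A, (Real.cos t : ℂ) ^ A.card * (coeff f A * coeff h A))
      (-(Real.sin θ : ℂ) * pairingDeriv (Real.cos θ) f h) θ := by
  rw [pairingDeriv, Finset.mul_sum]
  refine HasDerivAt.fun_sum fun A _ => ?_
  refine ((((Real.hasDerivAt_cos θ).ofReal_comp).fun_pow A.card).mul_const
    (coeff f A * coeff h A)).congr_deriv ?_
  push_cast
  ring

lemma continuous_sin_mul_pairingDeriv_cos (f h : (Fin n → Bool) → ℂ) :
    Continuous fun θ => (Real.sin θ : ℂ) * pairingDeriv (Real.cos θ) f h := by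
  unfold pairingDeriv
  fun_prop

lemma expect_sub_cosD_mul_eq_integral (θ₀ : ℝ) (f h : (Fin n → Bool) → ℂ) :
    expect (fun x => (f x - cosD θ₀ f x) * h x)
      = ∫ θ in (0 : ℝ)..θ₀, (Real.sin θ : ℂ) * pairingDeriv (Real.cos θ) f h := by
  have hderiv : ∀ θ ∈ Set.uIcc 0 θ₀,
      HasDerivAt (fun t => -∑ A, (Real.cos t : ℂ) ^ A.card * (coeff f A * coeff h A))
        ((Real.sin θ : ℂ) * pairingDeriv (Real.cos θ) f h) θ := fun θ _ =>
    (hasDerivAt_sum_cos_pow_mul f h θ).neg.congr_deriv (by ring)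
  rw [intervalIntegral.integral_eq_sub_of_hasDerivAt hderiv
    ((continuous_sin_mul_pairingDeriv_cos f h).intervalIntegrable _ _)]
  rw [expect_mul_eq_sum_coeff_mul_coeff]
  simp only [coeff_sub, coeff_cosD, Real.cos_zero, Complex.ofReal_one, one_pow, one_mul, sub_mul,
    Finset.sum_sub_distrib, mul_assoc]
  ring

lemma rLp_nonneg (p : ℝ) (G : (Fin n → Bool) → ℝ) : 0 ≤ rLp p G := by
  unfold rLp; positivity

lemma sum_mul_sqrt_noise_div_le_of_one_lt {p : ℝ} (hp1 : 1 < p) (hp2 : p ≤ 2) {c : ℝ}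
    (hc : |c| ≤ 1) {G : (Fin n → Bool) → ℝ} (hG : ∀ x, 0 ≤ G x) {g h : (Fin n → Bool) → ℂ}
    (hh : ∀ x, ‖h x‖ ≤ ‖g x‖ ^ (p - 1)) :
    (∑ x, G x * √(noise c (fun y => ‖h y‖ ^ 2) x)) / 2 ^ n
      ≤ rLp p G * ((∑ x, ‖g x‖ ^ p) / 2 ^ n) ^ (1 - 1 / p) := by
  set q := p.conjExponent
  have hpq : p.HolderConjugate q := .conjExponent hp1
  have hq2 : 2 ≤ q := by
    rw [hpq.conjugate_eq, le_div_iff₀ (by linarith)]; linarith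
  have hMq : ∀ x, √(noise c (fun y => ‖h y‖ ^ 2) x) ^ q ≤ noise c (fun y => ‖h y‖ ^ q) x := by
    intro x
    have hpow : ∀ y, (‖h y‖ ^ 2) ^ (q / 2) = ‖h y‖ ^ q := fun y => by
      rw [← Real.rpow_natCast, ← Real.rpow_mul (norm_nonneg _)]; congr 1; push_cast; ring
    have h0 : 0 ≤ noise c (fun y => ‖h y‖ ^ 2) x :=
      Finset.sum_nonneg fun σ _ => mul_nonneg (noiseWeight_nonneg hc σ) (sq_nonneg _)
    rw [Real.sqrt_eq_rpow, ← Real.rpow_mul h0]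
    simpa only [one_div_mul_eq_div, hpow] using
      noise_rpow_le hc (fun y => sq_nonneg ‖h y‖) (by linarith : 1 ≤ q / 2) x
  have hsum : ∑ x, √(noise c (fun y => ‖h y‖ ^ 2) x) ^ q ≤ ∑ x, ‖g x‖ ^ p :=
    calc _ ≤ ∑ x, noise c (fun y => ‖h y‖ ^ q) x := Finset.sum_le_sum fun x _ => hMq x
      _ = ∑ x, ‖h x‖ ^ q := sum_noise c _
      _ ≤ ∑ x, (‖g x‖ ^ (p - 1)) ^ q :=
          Finset.sum_le_sum fun x _ => Real.rpow_le_rpow (norm_nonneg _) (hh x) hpq.symm.nonneg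
      _ = ∑ x, ‖g x‖ ^ p := by
          simp_rw [← Real.rpow_mul (norm_nonneg _), hpq.sub_one_mul_conj]
  have hrLp : rLp p G = ((∑ x, G x ^ p) / 2 ^ n) ^ (1 / p) := by
    simp only [rLp, abs_of_nonneg (hG _)]
  calc _ ≤ ((∑ x, G x ^ p) / 2 ^ n) ^ (1 / p)
        * ((∑ x, √(noise c (fun y => ‖h y‖ ^ 2) x) ^ q) / 2 ^ n) ^ (1 / q) :=
        sum_mul_div_le_rpow_mul_rpow _ hpq (by positivity) (fun x _ => hG x)
          fun x _ => Real.sqrt_nonneg _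
    _ ≤ _ := by
        rw [← hrLp, one_div q, ← hpq.one_sub_inv, ← one_div]
        gcongr
        · exact rLp_nonneg p G
        · exact sub_nonneg.2 ((div_le_one (by linarith)).2 hp1.le)

lemma sum_mul_sqrt_noise_div_le {p : ℝ} (hp1 : 1 ≤ p) (hp2 : p ≤ 2) {c : ℝ} (hc : |c| ≤ 1)
    {G : (Fin n → Bool) → ℝ} (hG : ∀ x, 0 ≤ G x) {g h : (Fin n → Bool) → ℂ}
    (hh : ∀ x, ‖h x‖ ≤ ‖g x‖ ^ (p - 1)) :
    (∑ x, G x * √(noise c (fun y => ‖h y‖ ^ 2) x)) / 2 ^ n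
      ≤ rLp p G * ((∑ x, ‖g x‖ ^ p) / 2 ^ n) ^ (1 - 1 / p) := by
  rcases hp1.eq_or_lt with rfl | hp1
  · have hM : ∀ x, √(noise c (fun y => ‖h y‖ ^ 2) x) ≤ 1 := fun x =>
      Real.sqrt_le_one.2 (noise_le_one hc (fun y => pow_le_one₀ (norm_nonneg _)
        (by simpa using hh y)) x)
    simp only [rLp, div_one, sub_self, Real.rpow_zero, Real.rpow_one, mul_one, abs_of_nonneg (hG _)]
    gcongr with x
    exact mul_le_of_le_one_right (hG x) (hM x)
  · exact sum_mul_sqrt_noise_div_le_of_one_lt hp1 hp2 hc hG hh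

lemma norm_expect_sub_cosD_mul_le {p : ℝ} (hp1 : 1 ≤ p) (hp2 : p ≤ 2) {θ₀ : ℝ} (hθ₀ : 0 ≤ θ₀)
    (f h : (Fin n → Bool) → ℂ) (hh : ∀ x, ‖h x‖ ≤ ‖f x - cosD θ₀ f x‖ ^ (p - 1)) :
    ‖expect (fun x => (f x - cosD θ₀ f x) * h x)‖
      ≤ θ₀ / 2 * (rLp p (gradLen f)
        * ((∑ x, ‖f x - cosD θ₀ f x‖ ^ p) / 2 ^ n) ^ (1 - 1 / p)) := by
  set B := rLp p (gradLen f) * ((∑ x, ‖f x - cosD θ₀ f x‖ ^ p) / 2 ^ n) ^ (1 - 1 / p)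
  have hbound : ∀ θ, ‖(Real.sin θ : ℂ) * pairingDeriv (Real.cos θ) f h‖ ≤ B / 2 := by
    intro θ
    have h1 := two_mul_sqrt_mul_norm_pairingDeriv_le (Real.abs_cos_le_one θ) f h
    have h2 := sum_mul_sqrt_noise_div_le hp1 hp2 (Real.abs_cos_le_one θ) (G := gradLen f)
      (fun x => Real.sqrt_nonneg _) hh
    rw [norm_mul, Complex.norm_real, Real.norm_eq_abs, Real.abs_sin_eq_sqrt_one_sub_cos_sq]
    linarith
  rw [expect_sub_cosD_mul_eq_integral]
  calc _ ≤ B / 2 * |θ₀ - 0| :=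
        intervalIntegral.norm_integral_le_of_norm_le_const fun θ _ => hbound θ
    _ = θ₀ / 2 * B := by rw [sub_zero, abs_of_nonneg hθ₀]; ring

end DiscreteCube

open DiscreteCube

theorem cube_semigroup_poincare_general (n : ℕ) (p : ℝ) (hp1 : 1 ≤ p) (hp2 : p ≤ 2)
    (θ₀ : ℝ) (hθ0 : 0 ≤ θ₀) (f : (Fin n → Bool) → ℂ) :
    cLp p (fun x => f x - cosD θ₀ f x) ≤ (θ₀ / 2) * rLp p (gradLen f) := by
  set g := fun x => f x - cosD θ₀ f x
  set E := (∑ x, ‖g x‖ ^ p) / 2 ^ n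
  have hE : E = ‖expect fun x => g x * lpDual p (g x)‖ := by
    simp_rw [DiscreteCube.expect, mul_lpDual (by linarith : 0 < p), ← Complex.ofReal_sum]
    rw [norm_div, norm_pow, Complex.norm_two, Complex.norm_real,
      Real.norm_of_nonneg (by positivity)]
  refine rpow_one_div_le_of_le_mul_rpow (by positivity)
    (mul_nonneg (by linarith) (rLp_nonneg p _)) (by linarith) ?_
  calc E = _ := hE
    _ ≤ θ₀ / 2 * (rLp p (gradLen f) * E ^ (1 - 1 / p)) :=
        norm_expect_sub_cosD_mul_le hp1 hp2 hθ0 f _ fun x => norm_lpDual_le p (g x)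
    _ = _ := by ring

/-- For every `n ≥ 1`, `1 ≤ p ≤ 2`, `θ₀ ∈ [0, π/2)` and `f : Ω_n → ℂ`,
`‖f − cos^{Δ/4}θ₀(f)‖_p ≤ (θ₀/2) ‖ |∇f| ‖_p`. -/
theorem cube_semigroup_poincare (n : ℕ) (hn : 1 ≤ n) (p : ℝ) (hp1 : 1 ≤ p) (hp2 : p ≤ 2)
    (θ₀ : ℝ) (hθ0 : 0 ≤ θ₀) (hθ1 : θ₀ < π / 2) (f : (Fin n → Bool) → ℂ) :
    cLp p (fun x => f x - cosD θ₀ f x) ≤ (θ₀ / 2) * rLp p (gradLen f) :=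
  cube_semigroup_poincare_general n p hp1 hp2 θ₀ hθ0 f
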